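/- The rewriting system υ′ (the substitution calculus without Beta) is terminating: there is no infinite sequence of υ′-reductions. -/

import Mathlib

abbrev Var := ℕ

mutual
/-- Terms of the calculus λυ′: named variables, De Bruijn index 1,
application, abstraction, and explicit substitution `a[s]`. -/
inductive UTm : Type
  | fvar : Var → UTm
  | one : UTm
  | app : UTm → UTm → UTm
  | lam : UTm → UTm
  | sub : UTm → USb → UTm
/-- Substitutions of λυ′: `b/`, `↑`, `id`, `⇑s`. -/
inductive USb : Type
  | slash : UTm → USb
  | up : USb
  | id : USb
  | lift : USb → USb
end

mutual
/-- One-step υ′-reduction (λυ′ without Beta), closed under compatible contexts. -/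
inductive UStep : UTm → UTm → Prop
  | app {a b s} : UStep (.sub (.app a b) s) (.app (.sub a s) (.sub b s))
  | lam {a s} : UStep (.sub (.lam a) s) (.lam (.sub a (.lift s)))
  | var {b} : UStep (.sub .one (.slash b)) b
  | shift {a b} : UStep (.sub (.sub a .up) (.slash b)) a
  | varId : UStep (.sub .one .id) .one
  | shiftId {a} : UStep (.sub (.sub a .up) .id) (.sub a .up)
  | varLift {s} : UStep (.sub .one (.lift s)) .one
  | shiftLift {a s} : UStep (.sub (.sub a .up) (.lift s)) (.sub (.sub a s) .up)
  | appL {a a' b} : UStep a a' → UStep (.app a b) (.app a' b)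
  | appR {a b b'} : UStep b b' → UStep (.app a b) (.app a b')
  | lamC {a a'} : UStep a a' → UStep (.lam a) (.lam a')
  | subL {a a' s} : UStep a a' → UStep (.sub a s) (.sub a' s)
  | subR {a : UTm} {s s'} : USStep s s' → UStep (.sub a s) (.sub a s')
/-- One-step υ′-reduction inside substitutions. -/
inductive USStep : USb → USb → Prop
  | slash {b b'} : UStep b b' → USStep (.slash b) (.slash b')
  | lift {s s' : USb} : USStep s s' → USStep (.lift s) (.lift s')
end

mutual
/-- The typing judgement `n ⊢ a` of λυ′. -/
inductive UJ : ℕ → UTm → Prop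
  | fvar (x : Var) : UJ 0 (.fvar x)
  | one (n : ℕ) : UJ (n + 1) .one
  | app {n a b} : UJ n a → UJ n b → UJ n (.app a b)
  | lam {n a} : UJ (n + 1) a → UJ n (.lam a)
  | sub {n m s a} : USJ n s m → UJ m a → UJ n (.sub a s)
/-- The judgement `n ⊢ s ▷ m` of λυ′. -/
inductive USJ : ℕ → USb → ℕ → Prop
  | slash {n b} : UJ n b → USJ n (.slash b) (n + 1)
  | up (n : ℕ) : USJ (n + 1) .up n
  | id (n : ℕ) : USJ (n + 1) .id (n + 1)
  | lift {n m s} : USJ n s m → USJ (n + 1) (.lift s) (m + 1)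
end

/-!
Both weights are multiplicative on closures and at least 2 everywhere, so the rules App, Lambda,
Var, Shift, VarId, ShiftId and VarLift strictly decrease `‖·‖₁`. ShiftLift preserves `‖·‖₁`
because `‖⇑s‖₁ = ‖s‖₁`, but halves `‖·‖₂`, since it replaces `⇑s` (of weight `2 ‖s‖₂`) by `s`.
Every term constructor is strictly monotone in each argument for both weights, so the
lexicographic decrease of `(‖·‖₁, ‖·‖₂)` propagates through contexts.
-/

theorem Prod.Lex.toLex_lt_toLex_of_strictMono {α β γ δ : Type*} [Preorder α] [Preorder β]
    [Preorder γ] [Preorder δ] {f : α → γ} {g : β → δ} (hf : StrictMono f) (hg : StrictMono g)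
    {a c : α} {b d : β} (h : toLex (a, b) < toLex (c, d)) :
    toLex (f a, g b) < toLex (f c, g d) := by
  rcases Prod.Lex.toLex_lt_toLex.mp h with h₁ | ⟨rfl, h₂⟩
  · exact Prod.Lex.toLex_lt_toLex.mpr (.inl (hf h₁))
  · exact Prod.Lex.toLex_lt_toLex.mpr (.inr ⟨rfl, hg h₂⟩)

-- `weight 1` and `weight 2` are the paper's `‖·‖₁` and `‖·‖₂`: `k` is the factor in `‖⇑s‖ₖ = k ‖s‖ₖ`.
mutual
def UTm.weight (k : ℕ) : UTm → ℕ
  | .fvar _ => 2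
  | .one => 2
  | .app a b => a.weight k + b.weight k + 1
  | .lam a => a.weight k + 1
  | .sub a s => a.weight k * s.weight k
def USb.weight (k : ℕ) : USb → ℕ
  | .slash b => b.weight k
  | .up => 2
  | .id => 2
  | .lift s => k * s.weight k
end

mutual
theorem UTm.two_le_weight {k : ℕ} (hk : 1 ≤ k) : ∀ a : UTm, 2 ≤ a.weight k
  | .fvar _ | .one => le_rfl
  | .app a _ | .lam a => by have := a.two_le_weight hk; simp only [UTm.weight]; omega
  | .sub a s => by
    have := a.two_le_weight hk
    have := s.two_le_weight hk
    simp only [UTm.weight]; nlinarith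
theorem USb.two_le_weight {k : ℕ} (hk : 1 ≤ k) : ∀ s : USb, 2 ≤ s.weight k
  | .slash b => b.two_le_weight hk
  | .up | .id => le_rfl
  | .lift s => by have := s.two_le_weight hk; simp only [USb.weight]; nlinarith
end

def UTm.lexWeight (a : UTm) : ℕ ×ₗ ℕ := toLex (a.weight 1, a.weight 2)

def USb.lexWeight (s : USb) : ℕ ×ₗ ℕ := toLex (s.weight 1, s.weight 2)

theorem UTm.lexWeight_lt_of_weight_one_lt {a b : UTm} (h : b.weight 1 < a.weight 1) :
    b.lexWeight < a.lexWeight :=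
  Prod.Lex.toLex_lt_toLex.mpr (.inl h)

mutual
theorem UStep.lexWeight_lt : ∀ {a b : UTm}, UStep a b → b.lexWeight < a.lexWeight
  | _, _, .app (s := s) => UTm.lexWeight_lt_of_weight_one_lt <| by
    simp only [UTm.weight]; nlinarith [s.two_le_weight le_rfl]
  | _, _, .lam (s := s) => UTm.lexWeight_lt_of_weight_one_lt <| by
    simp only [UTm.weight, USb.weight]; nlinarith [s.two_le_weight le_rfl]
  | _, _, .var (b := b) => UTm.lexWeight_lt_of_weight_one_lt <| by
    simp only [UTm.weight, USb.weight]; nlinarith [b.two_le_weight le_rfl]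
  | _, _, .shift (a := a) (b := b) => UTm.lexWeight_lt_of_weight_one_lt <| by
    simp only [UTm.weight, USb.weight]; nlinarith [a.two_le_weight le_rfl, b.two_le_weight le_rfl]
  | _, _, .varId => UTm.lexWeight_lt_of_weight_one_lt <| by simp [UTm.weight, USb.weight]
  | _, _, .shiftId (a := a) => UTm.lexWeight_lt_of_weight_one_lt <| by
    simp only [UTm.weight, USb.weight]; nlinarith [a.two_le_weight le_rfl]
  | _, _, .varLift (s := s) => UTm.lexWeight_lt_of_weight_one_lt <| by
    simp only [UTm.weight, USb.weight]; nlinarith [s.two_le_weight le_rfl]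
  | _, _, .shiftLift (a := a) (s := s) =>
    Prod.Lex.toLex_lt_toLex.mpr <| .inr ⟨by simp only [UTm.weight, USb.weight]; ring, by
      simp only [UTm.weight, USb.weight]
      nlinarith [a.two_le_weight one_le_two, s.two_le_weight one_le_two]⟩
  | _, _, .appL h =>
    Prod.Lex.toLex_lt_toLex_of_strictMono (add_left_strictMono.add_const 1)
      (add_left_strictMono.add_const 1) h.lexWeight_lt
  | _, _, .appR h =>
    Prod.Lex.toLex_lt_toLex_of_strictMono (add_right_strictMono.add_const 1)
      (add_right_strictMono.add_const 1) h.lexWeight_lt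
  | _, _, .lamC h =>
    Prod.Lex.toLex_lt_toLex_of_strictMono (strictMono_id.add_const 1)
      (strictMono_id.add_const 1) h.lexWeight_lt
  | _, _, .subL (s := s) h =>
    Prod.Lex.toLex_lt_toLex_of_strictMono
      (strictMono_mul_right_of_pos ((s.two_le_weight le_rfl).trans_lt' two_pos))
      (strictMono_mul_right_of_pos ((s.two_le_weight one_le_two).trans_lt' two_pos)) h.lexWeight_lt
  | _, _, .subR (a := a) h =>
    Prod.Lex.toLex_lt_toLex_of_strictMono
      (strictMono_mul_left_of_pos ((a.two_le_weight le_rfl).trans_lt' two_pos))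
      (strictMono_mul_left_of_pos ((a.two_le_weight one_le_two).trans_lt' two_pos)) h.lexWeight_lt
theorem USStep.lexWeight_lt : ∀ {s t : USb}, USStep s t → t.lexWeight < s.lexWeight
  | _, _, .slash h => h.lexWeight_lt
  | _, _, .lift h =>
    Prod.Lex.toLex_lt_toLex_of_strictMono (strictMono_mul_left_of_pos one_pos)
      (strictMono_mul_left_of_pos two_pos) h.lexWeight_lt
end

/-- The rewriting system υ′ is terminating: there is no infinite sequence of
υ′-reductions. -/
theorem upsilon'_terminating (f : ℕ → UTm) : ¬ ∀ n : ℕ, UStep (f n) (f (n + 1)) := fun hf =>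
  not_strictAnti_of_wellFoundedLT (UTm.lexWeight ∘ f)
    (strictAnti_nat_of_succ_lt fun n => (hf n).lexWeight_lt)
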